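/- Let M ≥ 2 be an even integer, e ≥ 3 an integer, and Λ a finite abelian subgroup of (ℝ/ℤ)^e such that wt(y) ≤ M for all y ∈ Λ. Suppose x, x′ ∈ Λ satisfy wt(x) = wt(x′) = M and |supp(x) ∩ supp(x′)| = M/2. Then every coordinate of x and of x′ lies in {0, 1/2} (as elements of ℝ/ℤ). -/

import Mathlib

/-- The support of an element of `(ℝ/ℤ)^e`. -/
def supp {e : ℕ} (x : Fin e → AddCircle (1 : ℝ)) : Set (Fin e) := {i | x i ≠ 0}

/-- `wt x`: the number of nonzero coordinates. -/
noncomputable def wt {e : ℕ} (x : Fin e → AddCircle (1 : ℝ)) : ℕ := Nat.card (supp x)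

/-!
Let `D` be the symmetric difference of `supp x` and `supp x'`; it has exactly `M` points. Both
`x + x'` and `x - x'` are nonzero on all of `D`, so by the weight bound they vanish off `D`, i.e.
`x = x'` and `2x = 0` on `supp x ∩ supp x'`. Hence `2x` vanishes on `supp x'`, so `2x + x'` agrees
with `x'` there; since `supp x'` already has `M` points, `2x + x'` vanishes off `supp x'` too, so
`2x = 0` everywhere. Symmetrically `2x' = 0`, and the `2`-torsion of `ℝ/ℤ` is `{0, 1/2}`.
-/

open Function Set

section

variable {ι G : Type*} [AddCommGroup G]

lemma support_symmDiff_subset_support_add (f g : ι → G) :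
    symmDiff (support f) (support g) ⊆ support (f + g) := by
  rintro i (⟨hf, hg⟩ | ⟨hg, hf⟩) <;> simp_all [mem_support]

lemma support_symmDiff_subset_support_sub (f g : ι → G) :
    symmDiff (support f) (support g) ⊆ support (f - g) := by
  simpa [sub_eq_add_neg, support_neg] using support_symmDiff_subset_support_add f (-g)

lemma ncard_symmDiff_add_two_mul_ncard_inter [Finite ι] (s t : Set ι) :
    (symmDiff s t).ncard + 2 * (s ∩ t).ncard = s.ncard + t.ncard := by
  have hsub : s ∩ t ⊆ s ∪ t := inter_subset_left.trans subset_union_left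
  rw [symmDiff_eq_sup_sdiff_inf, show (s ⊔ t) \ (s ⊓ t) = (s ∪ t) \ (s ∩ t) from rfl,
    ncard_sdiff hsub, ← ncard_union_add_ncard_inter s t]
  have := ncard_le_ncard hsub
  omega

variable [Finite ι]

lemma apply_eq_zero_of_subset_support {z : ι → G} {A : Set ι} (hA : A ⊆ support z)
    (hz : (support z).ncard ≤ A.ncard) {i : ι} (hi : i ∉ A) : z i = 0 := by
  by_contra h
  have := ncard_le_ncard (insert_subset h hA)
  rw [ncard_insert_of_notMem hi] at this
  omega

variable {Λ : AddSubgroup (ι → G)} {M : ℕ} (hwt : ∀ z ∈ Λ, (support z).ncard ≤ M)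
  {x x' : ι → G} (hx : x ∈ Λ) (hx' : x' ∈ Λ)
include hwt hx hx'

lemma add_self_apply_eq_zero_of_notMem_symmDiff
    (hD : M ≤ (symmDiff (support x) (support x')).ncard) {i : ι}
    (hi : i ∉ symmDiff (support x) (support x')) : x i + x i = 0 := by
  have hadd : x i + x' i = 0 := apply_eq_zero_of_subset_support
    (support_symmDiff_subset_support_add x x') ((hwt _ (Λ.add_mem hx hx')).trans hD) hi
  have hsub : x i - x' i = 0 := apply_eq_zero_of_subset_support
    (support_symmDiff_subset_support_sub x x') ((hwt _ (Λ.sub_mem hx hx')).trans hD) hi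
  rwa [sub_eq_zero.mp hsub] at hadd ⊢

lemma add_self_eq_zero_of_le_ncard_symmDiff
    (hD : M ≤ (symmDiff (support x) (support x')).ncard) (hx'M : M ≤ (support x').ncard) :
    x + x = 0 := by
  have hx2 : ∀ i ∈ support x', x i + x i = 0 := by
    intro i hi
    by_cases hiD : i ∈ symmDiff (support x) (support x')
    · have : x i = 0 := by simpa [mem_symmDiff, hi] using hiD
      simp [this]
    · exact add_self_apply_eq_zero_of_notMem_symmDiff hwt hx hx' hD hiD
  have hsupp : support x' ⊆ support (x + x + x') := fun i hi => by
    simpa [hx2 i hi] using hi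
  funext i
  by_cases hi : i ∈ support x'
  · exact hx2 i hi
  · have := apply_eq_zero_of_subset_support hsupp
      ((hwt _ (Λ.add_mem (Λ.add_mem hx hx) hx')).trans hx'M) hi
    simpa [notMem_support.mp hi] using this

end

lemma wt_eq_ncard_support {e : ℕ} (y : Fin e → AddCircle (1 : ℝ)) : wt y = (support y).ncard :=
  Nat.card_coe_set_eq (supp y)

lemma AddCircle.eq_zero_or_eq_half_of_add_self_eq_zero {z : AddCircle (1 : ℝ)} (h : z + z = 0) :
    z = 0 ∨ z = (((1 : ℝ) / 2 : ℝ) : AddCircle (1 : ℝ)) := by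
  rw [← two_nsmul, AddCircle.nsmul_eq_zero_iff two_pos] at h
  obtain ⟨m, hm, rfl⟩ := h
  interval_cases m <;> norm_num

theorem stmt_8_general (e M : ℕ) (hMeven : Even M)
    (Λ : AddSubgroup (Fin e → AddCircle (1 : ℝ)))
    (hwt : ∀ y ∈ Λ, wt y ≤ M)
    (x x' : Fin e → AddCircle (1 : ℝ)) (hx : x ∈ Λ) (hx' : x' ∈ Λ)
    (hwx : wt x = M) (hwx' : wt x' = M)
    (hint : Nat.card (supp x ∩ supp x' : Set (Fin e)) = M / 2) :
    ∀ i : Fin e,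
      (x i = 0 ∨ x i = (((1 : ℝ) / 2 : ℝ) : AddCircle (1 : ℝ))) ∧
      (x' i = 0 ∨ x' i = (((1 : ℝ) / 2 : ℝ) : AddCircle (1 : ℝ))) := by
  simp only [wt_eq_ncard_support] at hwt hwx hwx'
  rw [Nat.card_coe_set_eq] at hint
  have hD : M ≤ (symmDiff (support x) (support x')).ncard := by
    have := ncard_symmDiff_add_two_mul_ncard_inter (support x) (support x')
    obtain ⟨k, rfl⟩ := hMeven
    change _ + 2 * (supp x ∩ supp x').ncard = _ at this
    omega
  have h2x := add_self_eq_zero_of_le_ncard_symmDiff hwt hx hx' hD hwx'.ge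
  have h2x' := add_self_eq_zero_of_le_ncard_symmDiff hwt hx' hx (by rwa [symmDiff_comm]) hwx.ge
  exact fun i => ⟨AddCircle.eq_zero_or_eq_half_of_add_self_eq_zero (congrFun h2x i),
    AddCircle.eq_zero_or_eq_half_of_add_self_eq_zero (congrFun h2x' i)⟩

theorem stmt_8 (e M : ℕ) (hM : 2 ≤ M) (hMeven : Even M) (he : 3 ≤ e)
    (Λ : AddSubgroup (Fin e → AddCircle (1 : ℝ)))
    (hfin : (Λ : Set (Fin e → AddCircle (1 : ℝ))).Finite)
    (hwt : ∀ y ∈ Λ, wt y ≤ M)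
    (x x' : Fin e → AddCircle (1 : ℝ)) (hx : x ∈ Λ) (hx' : x' ∈ Λ)
    (hwx : wt x = M) (hwx' : wt x' = M)
    (hint : Nat.card (supp x ∩ supp x' : Set (Fin e)) = M / 2) :
    ∀ i : Fin e,
      (x i = 0 ∨ x i = (((1 : ℝ) / 2 : ℝ) : AddCircle (1 : ℝ))) ∧
      (x' i = 0 ∨ x' i = (((1 : ℝ) / 2 : ℝ) : AddCircle (1 : ℝ))) :=
  stmt_8_general e M hMeven Λ hwt x x' hx hx' hwx hwx' hint
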